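/- Suppose $E(\Lambda)$ is a Riesz basis with constant $K$ for $L^2(D)$, $D \subset \mathbb{R}^2$ of measure 1, and $f = \sum_\lambda c_\lambda e^{2\pi i\langle\lambda,x\rangle}$ satisfies $\|f\|_{L^2(D)} = 1$ and $f = \frac{1}{\sqrt{\pi}\varepsilon}\mathbbm{1}_{\varepsilon\mathbb{D}}$ on $D$, with $\varepsilon\mathbb{D} + t \subset D$ for a vector $t$. Then the translated series $g(x) = \sum_\lambda c_\lambda e^{2\pi i\langle\lambda, x - t\rangle}$ satisfies $\int_{D\setminus(D+t)} |g|^2 \le K^2 - 1$. -/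

import Mathlib

open MeasureTheory Real Filter Topology

/-- The exponential `e(⟨λ,x⟩) = e^{2πi⟨λ,x⟩}` on `ℝ²`. -/
noncomputable def expFun2 (l x : EuclideanSpace ℝ (Fin 2)) : ℂ :=
  Complex.exp (2 * π * Complex.I * (inner ℝ l x : ℝ))

/-! The lower Riesz bound and `‖f‖ = 1` give `∑ |c_λ|² ≤ K`. The translated series is the series
with coefficients `c_λ e(-⟨λ,t⟩)`, which have the same moduli, so by the upper Riesz bound its
partial sums are Cauchy in `L²(D)` and their limit `g` has `∫_D |g|² ≤ K²`. On `ε𝔻 + t ⊆ D` the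
partial sums are translates of those of `f`, so `∫_{ε𝔻 + t} |g|² = ∫_{ε𝔻} |f|² = 1`; as
`ε𝔻 + t ⊆ D + t` misses `D \ (D + t)`, at most `K² - 1` is left for `D \ (D + t)`. -/

open scoped ENNReal

theorem summable_of_norm_sum_sq_le {ι E : Type*} [NormedAddCommGroup E] [CompleteSpace E]
    {v : ι → E} {a : ι → ℝ} {K : ℝ} (ha : Summable a)
    (h : ∀ F : Finset ι, ‖∑ i ∈ F, v i‖ ^ 2 ≤ K * ∑ i ∈ F, a i) : Summable v := by
  refine summable_iff_vanishing_norm.2 fun δ hδ => ?_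
  obtain ⟨s, hs⟩ := summable_iff_vanishing_norm.1 ha (δ ^ 2 / (|K| + 1)) (by positivity)
  refine ⟨s, fun F hF => ?_⟩
  have hsmall := hs F hF
  rw [Real.norm_eq_abs, lt_div_iff₀ (by positivity)] at hsmall
  refine lt_of_pow_lt_pow_left₀ 2 hδ.le ?_
  calc ‖∑ i ∈ F, v i‖ ^ 2 ≤ K * ∑ i ∈ F, a i := h F
    _ ≤ |K| * |∑ i ∈ F, a i| := by rw [← abs_mul]; exact le_abs_self _
    _ ≤ |∑ i ∈ F, a i| * (|K| + 1) := by nlinarith [abs_nonneg K, abs_nonneg (∑ i ∈ F, a i)]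
    _ < δ ^ 2 := hsmall

theorem sum_le_of_tendsto_of_sum_le {ι : Type*} {a : ι → ℝ} {b : Finset ι → ℝ} {B : ℝ}
    (ha : 0 ≤ a) (hb : Tendsto b atTop (𝓝 B)) (h : ∀ F, ∑ i ∈ F, a i ≤ b F) (F : Finset ι) :
    ∑ i ∈ F, a i ≤ B :=
  ge_of_tendsto hb (eventually_atTop.2 ⟨F, fun F' hF' =>
    (Finset.sum_le_sum_of_subset_of_nonneg hF' fun i _ _ => ha i).trans (h F')⟩)

namespace MeasureTheory

variable {α E : Type*} [MeasurableSpace α] {μ : Measure α} [NormedAddCommGroup E]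

theorem MemLp.norm_toLp_sq {u : α → E} (hu : MemLp u 2 μ) :
    ‖hu.toLp u‖ ^ 2 = ∫ x, ‖u x‖ ^ 2 ∂μ := by
  rw [Lp.norm_toLp, hu.eLpNorm_eq_integral_rpow_norm two_ne_zero ENNReal.ofNat_ne_top,
    ENNReal.toReal_ofReal (by positivity), ← Real.rpow_natCast, ← Real.rpow_mul
      (integral_nonneg fun x => by positivity)]
  norm_num

theorem MemLp.toLp_finsetSum {ι : Type*} {p : ℝ≥0∞} (s : Finset ι) {u : ι → α → E}
    (hu : ∀ i, MemLp (u i) p μ) :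
    (memLp_finsetSum s fun i _ => hu i).toLp (fun x => ∑ i ∈ s, u i x) =
      ∑ i ∈ s, (hu i).toLp (u i) := by
  classical
  induction s using Finset.induction_on with
  | empty => exact MemLp.toLp_zero _
  | insert i s hi ih =>
    simp only [Finset.sum_insert hi, ← ih]
    exact MemLp.toLp_add _ _

theorem tendsto_toLp_iff_tendsto_integral_norm_sub_sq {ι : Type*} {l : Filter ι}
    {u : α → E} {w : ι → α → E} (hu : MemLp u 2 μ) (hw : ∀ i, MemLp (w i) 2 μ) :
    Tendsto (fun i => (hw i).toLp (w i)) l (𝓝 (hu.toLp u)) ↔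
      Tendsto (fun i => ∫ x, ‖u x - w i x‖ ^ 2 ∂μ) l (𝓝 0) := by
  have hnorm : ∀ i, ‖hu.toLp u - (hw i).toLp (w i)‖ ^ 2 = ∫ x, ‖u x - w i x‖ ^ 2 ∂μ :=
    fun i => by rw [← MemLp.toLp_sub, MemLp.norm_toLp_sq]; rfl
  rw [tendsto_iff_norm_sub_tendsto_zero]
  simp_rw [norm_sub_rev _ (hu.toLp u), ← hnorm]
  constructor
  · intro h
    simpa using h.pow 2
  · intro h
    simpa [Function.comp_def] using (continuous_sqrt.tendsto 0).comp h

theorem tendsto_integral_norm_sq_of_tendsto_integral_norm_sub_sq {ι : Type*} {l : Filter ι}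
    {u : α → E} {w : ι → α → E} (hu : MemLp u 2 μ) (hw : ∀ i, MemLp (w i) 2 μ)
    (h : Tendsto (fun i => ∫ x, ‖u x - w i x‖ ^ 2 ∂μ) l (𝓝 0)) :
    Tendsto (fun i => ∫ x, ‖w i x‖ ^ 2 ∂μ) l (𝓝 (∫ x, ‖u x‖ ^ 2 ∂μ)) := by
  simpa only [MemLp.norm_toLp_sq] using
    ((tendsto_toLp_iff_tendsto_integral_norm_sub_sq hu hw).2 h).norm.pow 2

theorem tendsto_setIntegral_zero_of_subset {ι : Type*} {l : Filter ι} {s t : Set α}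
    {φ : ι → α → ℝ} (hφ : ∀ i x, 0 ≤ φ i x) (hint : ∀ i, IntegrableOn (φ i) t μ) (hst : s ⊆ t)
    (h : Tendsto (fun i => ∫ x in t, φ i x ∂μ) l (𝓝 0)) :
    Tendsto (fun i => ∫ x in s, φ i x ∂μ) l (𝓝 0) :=
  squeeze_zero (fun i => setIntegral_nonneg_of_ae (ae_of_all _ (hφ i)))
    (fun i => setIntegral_mono_set (hint i) (ae_of_all _ (hφ i)) hst.eventuallyLE) h

theorem tendsto_setIntegral_norm_sq_of_subset {ι : Type*} {l : Filter ι} {D s : Set α}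
    {f : α → E} {u : ι → α → E}
    (hf : MemLp f 2 (μ.restrict D)) (hu : ∀ i, MemLp (u i) 2 (μ.restrict D)) (hs : s ⊆ D)
    (hfu : Tendsto (fun i => ∫ x in D, ‖f x - u i x‖ ^ 2 ∂μ) l (𝓝 0)) :
    Tendsto (fun i => ∫ x in s, ‖u i x‖ ^ 2 ∂μ) l (𝓝 (∫ x in s, ‖f x‖ ^ 2 ∂μ)) :=
  have hres : μ.restrict s ≤ μ.restrict D := Measure.restrict_mono hs le_rfl
  tendsto_integral_norm_sq_of_tendsto_integral_norm_sub_sq (hf.mono_measure hres)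
    (fun i => (hu i).mono_measure hres)
    (tendsto_setIntegral_zero_of_subset (fun _ _ => sq_nonneg _)
      (fun i => (hf.sub (hu i)).norm.integrable_sq) hs hfu)

theorem setIntegral_add_setIntegral_le {s t u : Set α} {φ : α → ℝ} (hφ : 0 ≤ φ)
    (hint : IntegrableOn φ u μ) (ht : MeasurableSet t)
    (hst : Disjoint s t) (hsu : s ⊆ u) (htu : t ⊆ u) :
    ∫ x in s, φ x ∂μ + ∫ x in t, φ x ∂μ ≤ ∫ x in u, φ x ∂μ := by
  rw [← setIntegral_union hst ht (hint.mono_set hsu) (hint.mono_set htu)]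
  exact setIntegral_mono_set hint (ae_of_all _ hφ) (Set.union_subset hsu htu).eventuallyLE

theorem Lp.norm_sq_eq_integral (g : Lp E 2 μ) : ‖g‖ ^ 2 = ∫ x, ‖g x‖ ^ 2 ∂μ := by
  simpa using (Lp.memLp g).norm_toLp_sq

section Translation

variable {G ι : Type*} [AddGroup G] [MeasurableSpace G] [MeasurableAdd G] {μ : Measure G}
  [μ.IsAddRightInvariant] {l : Filter ι}

theorem setIntegral_image_add_right (t : G) (s : Set G) (φ : G → ℝ) :
    ∫ x in (· + t) '' s, φ x ∂μ = ∫ x in s, φ (x + t) ∂μ :=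
  (measurePreserving_add_right μ t).setIntegral_image_emb
    (MeasurableEquiv.addRight t).measurableEmbedding φ s

theorem setIntegral_norm_sq_image_add_right_eq [l.NeBot] {D s : Set G} {t : G}
    {f g : G → E} {u : ι → G → E} (hf : MemLp f 2 (μ.restrict D))
    (hg : MemLp g 2 (μ.restrict D)) (hu : ∀ i, MemLp (u i) 2 (μ.restrict D))
    (hu_t : ∀ i, MemLp (fun x => u i (x - t)) 2 (μ.restrict D)) (hs : s ⊆ D)
    (hs_t : (· + t) '' s ⊆ D)
    (hfu : Tendsto (fun i => ∫ x in D, ‖f x - u i x‖ ^ 2 ∂μ) l (𝓝 0))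
    (hgu : Tendsto (fun i => ∫ x in D, ‖g x - u i (x - t)‖ ^ 2 ∂μ) l (𝓝 0)) :
    ∫ x in (· + t) '' s, ‖g x‖ ^ 2 ∂μ = ∫ x in s, ‖f x‖ ^ 2 ∂μ := by
  refine tendsto_nhds_unique ?_ (tendsto_setIntegral_norm_sq_of_subset hf hu hs hfu)
  refine (tendsto_setIntegral_norm_sq_of_subset hg hu_t hs_t hgu).congr fun i => ?_
  simp only [setIntegral_image_add_right, add_sub_cancel_right]

end Translation

end MeasureTheory

section RieszSequence

variable {ι α : Type*} [MeasurableSpace α] {μ : Measure α} {e : ι → α → ℂ} {K : ℝ}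

theorem memLp_sum_mul (he : ∀ i, MemLp (e i) 2 μ) (c : ι → ℂ) (F : Finset ι) :
    MemLp (fun x => ∑ i ∈ F, c i * e i x) 2 μ :=
  memLp_finsetSum F fun i _ => (he i).const_mul (c i)

theorem sum_norm_sq_le_of_lower_bound (he : ∀ i, MemLp (e i) 2 μ) {c : ι → ℂ} {f : α → ℂ}
    (hf : MemLp f 2 μ)
    (hlower : ∀ F : Finset ι, ∑ i ∈ F, ‖c i‖ ^ 2 ≤ K * ∫ x, ‖∑ i ∈ F, c i * e i x‖ ^ 2 ∂μ)
    (hc : Tendsto (fun F : Finset ι => ∫ x, ‖f x - ∑ i ∈ F, c i * e i x‖ ^ 2 ∂μ) atTop (𝓝 0))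
    (F : Finset ι) : ∑ i ∈ F, ‖c i‖ ^ 2 ≤ K * ∫ x, ‖f x‖ ^ 2 ∂μ :=
  sum_le_of_tendsto_of_sum_le (fun _ => sq_nonneg _)
    ((tendsto_integral_norm_sq_of_tendsto_integral_norm_sub_sq hf (memLp_sum_mul he c)
      hc).const_mul K) hlower F

theorem exists_tendsto_of_upper_bound (he : ∀ i, MemLp (e i) 2 μ) (hK : 0 ≤ K) {c : ι → ℂ}
    (hupper : ∀ F : Finset ι, ∫ x, ‖∑ i ∈ F, c i * e i x‖ ^ 2 ∂μ ≤ K * ∑ i ∈ F, ‖c i‖ ^ 2)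
    (hc : Summable fun i => ‖c i‖ ^ 2) :
    ∃ g : α → ℂ, MemLp g 2 μ ∧
      Tendsto (fun F : Finset ι => ∫ x, ‖g x - ∑ i ∈ F, c i * e i x‖ ^ 2 ∂μ) atTop (𝓝 0) ∧
      ∫ x, ‖g x‖ ^ 2 ∂μ ≤ K * ∑' i, ‖c i‖ ^ 2 := by
  set v : ι → Lp ℂ 2 μ := fun i => ((he i).const_mul (c i)).toLp _
  have hsum_v (F : Finset ι) : ∑ i ∈ F, v i = (memLp_sum_mul he c F).toLp _ :=
    (MemLp.toLp_finsetSum F _).symm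
  have hnorm_v (F : Finset ι) : ‖∑ i ∈ F, v i‖ ^ 2 = ∫ x, ‖∑ i ∈ F, c i * e i x‖ ^ 2 ∂μ := by
    rw [hsum_v, MemLp.norm_toLp_sq]
  obtain ⟨G, hG⟩ : Summable v :=
    summable_of_norm_sum_sq_le hc fun F => (hnorm_v F).trans_le (hupper F)
  refine ⟨G, Lp.memLp G, ?_, ?_⟩
  · rw [← tendsto_toLp_iff_tendsto_integral_norm_sub_sq (Lp.memLp _) (memLp_sum_mul he c),
      Lp.toLp_coeFn]
    simpa only [HasSum, SummationFilter.unconditional_filter, hsum_v] using hG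
  · rw [← Lp.norm_sq_eq_integral]
    refine le_of_tendsto' (hG.norm.pow 2) fun F => ?_
    rw [hnorm_v]
    exact (hupper F).trans (mul_le_mul_of_nonneg_left (hc.sum_le_tsum F fun i _ => sq_nonneg _) hK)

end RieszSequence

theorem norm_expFun2 (l x : EuclideanSpace ℝ (Fin 2)) : ‖expFun2 l x‖ = 1 := by
  simp [expFun2, Complex.norm_exp]

theorem continuous_expFun2 (l : EuclideanSpace ℝ (Fin 2)) : Continuous (expFun2 l) := by
  unfold expFun2
  fun_prop

theorem memLp_expFun2_sub {μ : Measure (EuclideanSpace ℝ (Fin 2))} [IsFiniteMeasure μ]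
    (p : ℝ≥0∞) (l t : EuclideanSpace ℝ (Fin 2)) : MemLp (fun x => expFun2 l (x - t)) p μ :=
  MemLp.of_bound ((continuous_expFun2 l).comp (continuous_sub_right t)).aestronglyMeasurable 1
    (ae_of_all _ fun _ => (norm_expFun2 l _).le)

theorem memLp_expFun2 {μ : Measure (EuclideanSpace ℝ (Fin 2))} [IsFiniteMeasure μ]
    (p : ℝ≥0∞) (l : EuclideanSpace ℝ (Fin 2)) : MemLp (expFun2 l) p μ := by
  simpa using memLp_expFun2_sub (μ := μ) p l 0

theorem mul_expFun2_sub (a : ℂ) (l x t : EuclideanSpace ℝ (Fin 2)) :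
    a * expFun2 l (x - t) = a * expFun2 l (-t) * expFun2 l x := by
  simp only [expFun2, inner_sub_right, inner_neg_right, mul_assoc, ← Complex.exp_add]
  push_cast
  ring_nf

theorem exists_tendsto_translated_series {μ : Measure (EuclideanSpace ℝ (Fin 2))}
    [IsFiniteMeasure μ] {Λ : Set (EuclideanSpace ℝ (Fin 2))} {K : ℝ} (hK : 0 < K)
    {c : Λ → ℂ} {f : EuclideanSpace ℝ (Fin 2) → ℂ} (hf : MemLp f 2 μ)
    (hlower : ∀ F : Finset Λ,
      (1 / K) * ∑ l ∈ F, ‖c l‖ ^ 2 ≤ ∫ x, ‖∑ l ∈ F, c l * expFun2 l.1 x‖ ^ 2 ∂μ)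
    (hupper : ∀ (F : Finset Λ) (c : Λ → ℂ),
      ∫ x, ‖∑ l ∈ F, c l * expFun2 l.1 x‖ ^ 2 ∂μ ≤ K * ∑ l ∈ F, ‖c l‖ ^ 2)
    (hexp : Tendsto (fun F : Finset Λ =>
      ∫ x, ‖f x - ∑ l ∈ F, c l * expFun2 l.1 x‖ ^ 2 ∂μ) atTop (𝓝 0))
    (t : EuclideanSpace ℝ (Fin 2)) :
    ∃ g : EuclideanSpace ℝ (Fin 2) → ℂ, MemLp g 2 μ ∧
      Tendsto (fun F : Finset Λ =>
        ∫ x, ‖g x - ∑ l ∈ F, c l * expFun2 l.1 (x - t)‖ ^ 2 ∂μ) atTop (𝓝 0) ∧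
      ∫ x, ‖g x‖ ^ 2 ∂μ ≤ K ^ 2 * ∫ x, ‖f x‖ ^ 2 ∂μ := by
  have he (l : Λ) : MemLp (expFun2 l.1) 2 μ := memLp_expFun2 2 l.1
  have hc_le (F : Finset Λ) : ∑ l ∈ F, ‖c l‖ ^ 2 ≤ K * ∫ x, ‖f x‖ ^ 2 ∂μ :=
    sum_norm_sq_le_of_lower_bound he hf
      (fun F => (inv_mul_le_iff₀ hK).1 (by simpa only [one_div] using hlower F)) hexp F
  set c' : Λ → ℂ := fun l => c l * expFun2 l.1 (-t)
  have hc' (l : Λ) : ‖c' l‖ = ‖c l‖ := by simp only [c', norm_mul, norm_expFun2, mul_one]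
  obtain ⟨g, hg, hg_tendsto, hg_norm⟩ := exists_tendsto_of_upper_bound (c := c') he hK.le
    (fun F => by simpa only [hc'] using hupper F c')
    (by simpa only [hc'] using summable_of_sum_le (fun _ => sq_nonneg _) hc_le)
  refine ⟨g, hg, by simpa only [mul_expFun2_sub] using hg_tendsto, hg_norm.trans ?_⟩
  rw [sq, mul_assoc]
  gcongr
  simpa only [hc'] using Real.tsum_le_of_sum_le (fun _ => sq_nonneg _) hc_le

theorem translated_series_outer_bound_general (D : Set (EuclideanSpace ℝ (Fin 2)))
    (hDm : MeasurableSet D) (hD : volume D = 1)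
    (Λ : Set (EuclideanSpace ℝ (Fin 2))) (K : ℝ) (hK : 1 ≤ K)
    (hbound : ∀ (F : Finset Λ) (c : Λ → ℂ),
      (1 / K) * ∑ l ∈ F, ‖c l‖ ^ 2 ≤ ∫ x in D, ‖∑ l ∈ F, c l * expFun2 l.1 x‖ ^ 2 ∧
      ∫ x in D, ‖∑ l ∈ F, c l * expFun2 l.1 x‖ ^ 2 ≤ K * ∑ l ∈ F, ‖c l‖ ^ 2)
    (ε : ℝ) (t : EuclideanSpace ℝ (Fin 2))
    (hball : Metric.closedBall (0 : EuclideanSpace ℝ (Fin 2)) ε ⊆ D)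
    (hballt : ∀ x ∈ Metric.closedBall (0 : EuclideanSpace ℝ (Fin 2)) ε, x + t ∈ D)
    (f : EuclideanSpace ℝ (Fin 2) → ℂ)
    (hf1 : ∫ x in D, ‖f x‖ ^ 2 = 1)
    (hfD : ∀ x ∈ D, f x =
      Set.indicator (Metric.closedBall (0 : EuclideanSpace ℝ (Fin 2)) ε)
        (fun _ => (1 / (Real.sqrt π * ε) : ℂ)) x)
    (c : Λ → ℂ)
    (hexp : Tendsto (fun F : Finset Λ =>
        ∫ x in D, ‖f x - ∑ l ∈ F, c l * expFun2 l.1 x‖ ^ 2) atTop (𝓝 0)) :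
    ∃ g : EuclideanSpace ℝ (Fin 2) → ℂ,
      Tendsto (fun F : Finset Λ =>
          ∫ x in D, ‖g x - ∑ l ∈ F, c l * expFun2 l.1 (x - t)‖ ^ 2) atTop (𝓝 0) ∧
      ∫ x in D \ ((fun y => y + t) '' D), ‖g x‖ ^ 2 ≤ K ^ 2 - 1 := by
  have : IsFiniteMeasure (volume.restrict D) := ⟨by simp [hD]⟩
  have hf : MemLp f 2 (volume.restrict D) :=
    (memLp_indicator_const 2 measurableSet_closedBall _ (Or.inr (measure_ne_top _ _))).ae_eq
      ((ae_restrict_iff' hDm).2 (ae_of_all _ fun x hx => (hfD x hx).symm))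
  obtain ⟨g, hg, hg_tendsto, hg_D⟩ := exists_tendsto_translated_series (by linarith) hf
    (fun F => (hbound F c).1) (fun F c => (hbound F c).2) hexp t
  refine ⟨g, hg_tendsto, ?_⟩
  have hball_t : (· + t) '' Metric.closedBall 0 ε ⊆ D := Set.image_subset_iff.2 hballt
  have hg_ball : ∫ x in (· + t) '' Metric.closedBall 0 ε, ‖g x‖ ^ 2 = 1 := by
    have he (l : Λ) : MemLp (expFun2 l.1) 2 (volume.restrict D) := memLp_expFun2 2 l.1
    have he_t (l : Λ) : MemLp (fun x => expFun2 l.1 (x - t)) 2 (volume.restrict D) :=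
      memLp_expFun2_sub 2 l.1 t
    rw [setIntegral_norm_sq_image_add_right_eq hf hg (memLp_sum_mul he c) (memLp_sum_mul he_t c)
      hball hball_t hexp hg_tendsto, ← hf1]
    exact (setIntegral_eq_of_subset_of_forall_sdiff_eq_zero hDm hball
      fun x hx => by simp [hfD x hx.1, hx.2]).symm
  have h_split : (∫ x in D \ ((fun y => y + t) '' D), ‖g x‖ ^ 2) +
      ∫ x in (· + t) '' Metric.closedBall 0 ε, ‖g x‖ ^ 2 ≤ ∫ x in D, ‖g x‖ ^ 2 :=
    setIntegral_add_setIntegral_le (fun x => sq_nonneg ‖g x‖) hg.norm.integrable_sq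
      ((MeasurableEquiv.addRight t).measurableEmbedding.measurableSet_image.2
        measurableSet_closedBall)
      (Set.disjoint_sdiff_left.mono_right (Set.image_mono hball)) Set.sdiff_subset hball_t
  rw [hf1, mul_one] at hg_D
  linarith

/-- If `E(Λ)` is a Riesz basis with constant `K` for `L²(D)`, `|D| = 1`, and
`f = ∑ c_λ e(⟨λ,x⟩)` is the normalised indicator of `ε𝔻` on `D` with
`ε𝔻 + t ⊆ D`, then the translated series converges in `L²(D)` to some `g` with
`∫_{D \ (D+t)} |g|² ≤ K² - 1`. -/
theorem translated_series_outer_bound (D : Set (EuclideanSpace ℝ (Fin 2)))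
    (hDm : MeasurableSet D) (hD : volume D = 1)
    (Λ : Set (EuclideanSpace ℝ (Fin 2))) (K : ℝ) (hK : 1 ≤ K)
    (hcomplete : ∀ f : EuclideanSpace ℝ (Fin 2) → ℂ,
      MemLp f 2 (volume.restrict D) →
      ∀ ε > 0, ∃ (F : Finset Λ) (c : Λ → ℂ),
        ∫ x in D, ‖f x - ∑ l ∈ F, c l * expFun2 l.1 x‖ ^ 2 < ε)
    (hbound : ∀ (F : Finset Λ) (c : Λ → ℂ),
      (1 / K) * ∑ l ∈ F, ‖c l‖ ^ 2 ≤ ∫ x in D, ‖∑ l ∈ F, c l * expFun2 l.1 x‖ ^ 2 ∧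
      ∫ x in D, ‖∑ l ∈ F, c l * expFun2 l.1 x‖ ^ 2 ≤ K * ∑ l ∈ F, ‖c l‖ ^ 2)
    (ε : ℝ) (hε : 0 < ε) (t : EuclideanSpace ℝ (Fin 2))
    (hball : Metric.closedBall (0 : EuclideanSpace ℝ (Fin 2)) ε ⊆ D)
    (hballt : ∀ x ∈ Metric.closedBall (0 : EuclideanSpace ℝ (Fin 2)) ε, x + t ∈ D)
    (f : EuclideanSpace ℝ (Fin 2) → ℂ)
    (hf1 : ∫ x in D, ‖f x‖ ^ 2 = 1)
    (hfD : ∀ x ∈ D, f x =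
      Set.indicator (Metric.closedBall (0 : EuclideanSpace ℝ (Fin 2)) ε)
        (fun _ => (1 / (Real.sqrt π * ε) : ℂ)) x)
    (c : Λ → ℂ)
    (hexp : Tendsto (fun F : Finset Λ =>
        ∫ x in D, ‖f x - ∑ l ∈ F, c l * expFun2 l.1 x‖ ^ 2) atTop (𝓝 0)) :
    ∃ g : EuclideanSpace ℝ (Fin 2) → ℂ,
      Tendsto (fun F : Finset Λ =>
          ∫ x in D, ‖g x - ∑ l ∈ F, c l * expFun2 l.1 (x - t)‖ ^ 2) atTop (𝓝 0) ∧
      ∫ x in D \ ((fun y => y + t) '' D), ‖g x‖ ^ 2 ≤ K ^ 2 - 1 :=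
  translated_series_outer_bound_general D hDm hD Λ K hK hbound ε t hball hballt f hf1 hfD c hexp
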